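/- Assume in addition that h is twice differentiable at 0 with h''(0) < 0 and that inf_Θ g > 0 (so that log g is bounded). Let t ∈ ℝ and let μ be a T-invariant probability measure on (Θ, 𝓑). If μ(N_t) = 0, then γ(μ) > t. -/

import Mathlib

open MeasureTheory Filter Topology

/-- The general setting of the paper: a measurable base system with invertible
driving map `T`, a concave fibre function `h` (with its derivative `h'` on `[0,∞)`)
and a bounded measurable positive function `g`. -/
structure Setting (Θ : Type*) [MeasurableSpace Θ] where
  T : Θ → Θ
  Tinv : Θ → Θ
  left_inv : Function.LeftInverse Tinv T
  right_inv : Function.RightInverse Tinv T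
  T_meas : Measurable T
  Tinv_meas : Measurable Tinv
  h : ℝ → ℝ
  h' : ℝ → ℝ
  h_hasDeriv : ∀ x ∈ Set.Ici (0 : ℝ), HasDerivWithinAt h (h' x) (Set.Ici 0) x
  h'_cont : ContinuousOn h' (Set.Ici 0)
  h_strictConcave : StrictConcaveOn ℝ (Set.Ici 0) h
  h_zero : h 0 = 0
  h'_pos : ∀ x : ℝ, 0 < x → 0 < h' x
  h'_zero : h' 0 = 1
  h_sublinear : Tendsto (fun x => h x / x) atTop (𝓝 0)
  g : Θ → ℝ
  g_pos : ∀ θ, 0 < g θ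
  g_bdd : ∃ C : ℝ, ∀ θ, g θ ≤ C
  g_meas : Measurable g

namespace Setting

variable {Θ : Type*} [MeasurableSpace Θ]

/-- The fibre maps `f_t(θ,x) = e^{-t} g(θ) h(x)`. -/
noncomputable def f (S : Setting Θ) (t : ℝ) (θ : Θ) (x : ℝ) : ℝ :=
  Real.exp (-t) * S.g θ * S.h x

/-- The iterated fibre maps: `fn t 0 θ x = x` and
`fn t (n+1) θ x = f t (T^[n] θ) (fn t n θ x)`, so that `fn t 1 = f t`. -/
noncomputable def fn (S : Setting Θ) (t : ℝ) : ℕ → Θ → ℝ → ℝ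
  | 0, _, x => x
  | n + 1, θ, x => S.f t (S.T^[n] θ) (S.fn t n θ x)

/-- `ψ_{t,n}(θ) = f_t^n(T^{-n}θ, M)`. -/
noncomputable def ψ (S : Setting Θ) (t M : ℝ) (n : ℕ) (θ : Θ) : ℝ :=
  S.fn t n (S.Tinv^[n] θ) M

/-- The maximal invariant function `φ_t(θ) = inf_{n ≥ 1} ψ_{t,n}(θ)`. -/
noncomputable def φ (S : Setting Θ) (t M : ℝ) (θ : Θ) : ℝ :=
  ⨅ n : ℕ, S.ψ t M (n + 1) θ

/-- The zero set `N_t = {θ : φ_t(θ) = 0}`. -/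
noncomputable def Nset (S : Setting Θ) (t M : ℝ) : Set Θ := {θ | S.φ t M θ = 0}

/-- The critical parameter `t_c(θ) = inf {t : φ_t(θ) = 0}`. -/
noncomputable def tc (S : Setting Θ) (M : ℝ → ℝ) (θ : Θ) : ℝ :=
  sInf {t : ℝ | S.φ t (M t) θ = 0}

/-- The bifurcation set `S_t = {θ : t_c(θ) = t}`. -/
noncomputable def Sset (S : Setting Θ) (M : ℝ → ℝ) (t : ℝ) : Set Θ :=
  {θ | S.tc M θ = t}

/-- The Birkhoff average `Γ^{(n)}(θ) = (1/n) ∑_{k=1}^n log g(T^{-k}θ)`. -/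
noncomputable def Γn (S : Setting Θ) (n : ℕ) (θ : Θ) : ℝ :=
  (∑ k ∈ Finset.range n, Real.log (S.g (S.Tinv^[k + 1] θ))) / n

/-- The lower backwards Lyapunov average `Γ(θ) = liminf_n Γ^{(n)}(θ)`. -/
noncomputable def Γ (S : Setting Θ) (θ : Θ) : ℝ :=
  Filter.liminf (fun n : ℕ => S.Γn n θ) Filter.atTop

/-- The averaged exponent `γ(μ) = ∫ log g dμ`. -/
noncomputable def γfn (S : Setting Θ) (μ : Measure Θ) : ℝ :=
  ∫ θ, Real.log (S.g θ) ∂μ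

/-- The function `H(x) = log (h(x)/x)`. -/
noncomputable def Hfn (S : Setting Θ) (x : ℝ) : ℝ := Real.log (S.h x / x)

end Setting

open Set

/-!
The maximal invariant function satisfies `φ_t (T θ) = f_t (θ, φ_t θ)`, so wherever `φ_t θ > 0`,
`log φ_t (T θ) - log φ_t θ = log g θ - t + log (h (φ_t θ) / φ_t θ)`, whose last term is negative
because strict concavity and `h'(0) = 1` force `h x < x`. If `μ(N_t) = 0` this holds `μ`-a.e.
Now `log φ_t` is bounded above, and whenever `F` is bounded above and its coboundary `F ∘ T - F`
has an integrable majorant `u`, invariance of `μ` gives `∫ u ≥ 0` (truncate `F` from below and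
apply Fatou's lemma). Hence `γ(μ) - t` exceeds the integral of a negative function.
-/

section CoboundaryBound

variable {α : Type*} [MeasurableSpace α] {μ : Measure α}

lemma max_sub_max_le_max_sub (a b c : ℝ) : max b c - max a c ≤ max (b - a) 0 := by
  rcases le_total b a with h | h
  · linarith [max_le_max h (le_refl c), le_max_right (b - a) 0]
  · linarith [max_le (by linarith [le_max_left a c] : b ≤ max a c + (b - a))
      (by linarith [le_max_right a c] : c ≤ max a c + (b - a)), le_max_left (b - a) 0]

lemma MeasureTheory.MeasurePreserving.integral_comp_self {T : α → α} (hT : MeasurePreserving T μ μ)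
    {f : α → ℝ} (hf : AEStronglyMeasurable f μ) : ∫ x, f (T x) ∂μ = ∫ x, f x ∂μ := by
  rw [← integral_map hT.aemeasurable (by rwa [hT.map_eq]), hT.map_eq]

lemma integral_neg_of_ae_neg [NeZero μ] {f : α → ℝ} (hf : Integrable f μ)
    (hneg : ∀ᵐ x ∂μ, f x < 0) : ∫ x, f x ∂μ < 0 := by
  have hsupp : μ (Function.support (-f)) ≠ 0 := fun h0 => by
    obtain ⟨x, hx0, hx⟩ := ((measure_eq_zero_iff_ae_notMem.1 h0).and hneg).exists
    exact hx0 (neg_ne_zero.2 hx.ne)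
  have hpos := (integral_pos_iff_support_of_nonneg_ae (hneg.mono fun x hx => (neg_pos.2 hx).le)
    hf.neg).2 (pos_iff_ne_zero.2 hsupp)
  rwa [integral_neg, neg_pos] at hpos

lemma integrable_max_neg_natCast [IsFiniteMeasure μ] {F : α → ℝ} (hF : Measurable F)
    (hFbdd : BddAbove (range F)) (N : ℕ) : Integrable (fun x => max (F x) (-N)) μ := by
  obtain ⟨K, hK⟩ := hFbdd
  refine Integrable.of_bound (hF.max measurable_const).aestronglyMeasurable (max |K| N) <|
    ae_of_all _ fun x => abs_le.2 ⟨?_, max_le ?_ ?_⟩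
  · linarith [le_max_right (F x) (-N), le_max_right |K| (N : ℝ)]
  · exact (hK ⟨x, rfl⟩).trans ((le_abs_self K).trans (le_max_left _ _))
  · linarith [le_max_right |K| (N : ℝ), N.cast_nonneg (α := ℝ)]

theorem integral_nonneg_of_comp_sub_le [IsFiniteMeasure μ] {T : α → α}
    (hT : MeasurePreserving T μ μ) {F u : α → ℝ} (hF : Measurable F) (hFbdd : BddAbove (range F))
    (hu : Integrable u μ) (hFu : ∀ᵐ x ∂μ, F (T x) - F x ≤ u x) : 0 ≤ ∫ x, u x ∂μ := by
  set v : α → ℝ := fun x => max (u x) 0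
  have hv : Integrable v μ := hu.pos_part
  set D : ℕ → α → ℝ := fun N x => max (F (T x)) (-N) - max (F x) (-N)
  have hFN := integrable_max_neg_natCast (μ := μ) hF hFbdd
  have hFNT : ∀ N : ℕ, Integrable (fun x => max (F (T x)) (-N)) μ := fun N =>
    hT.integrable_comp_of_integrable (hFN N)
  have hD_int : ∀ N, Integrable (D N) μ := fun N => (hFNT N).sub (hFN N)
  have hD_integral : ∀ N, ∫ x, D N x ∂μ = 0 := fun N => by
    rw [integral_sub (hFNT N) (hFN N)]
    exact sub_eq_zero.2 (hT.integral_comp_self (hFN N).aestronglyMeasurable)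
  have hD_le : ∀ᵐ x ∂μ, ∀ N, D N x ≤ v x := hFu.mono fun x hx N =>
    (max_sub_max_le_max_sub _ _ _).trans (max_le_max hx le_rfl)
  have hD_eventually : ∀ x, ∀ᶠ N : ℕ in atTop, D N x = F (T x) - F x := fun x => by
    filter_upwards [eventually_ge_atTop ⌈max (-F x) (-F (T x))⌉₊] with N hN
    have hNF := Nat.ceil_le.1 hN
    simp only [D, max_eq_left (by linarith [le_max_left (-F x) (-F (T x))] : -(N : ℝ) ≤ F x),
      max_eq_left (by linarith [le_max_right (-F x) (-F (T x))] : -(N : ℝ) ≤ F (T x))]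
  -- Fatou's lemma for `v - D N ≥ 0`, which tends to `v - (F ∘ T - F) ≥ v - u`.
  have hfatou : ENNReal.ofReal (∫ x, v x - u x ∂μ) ≤ ENNReal.ofReal (∫ x, v x ∂μ) :=
    calc ENNReal.ofReal (∫ x, v x - u x ∂μ)
        = ∫⁻ x, ENNReal.ofReal (v x - u x) ∂μ :=
          ofReal_integral_eq_lintegral_ofReal (hv.sub hu)
            (ae_of_all _ fun x => sub_nonneg.2 (le_max_left _ _))
      _ ≤ ∫⁻ x, liminf (fun N => ENNReal.ofReal (v x - D N x)) atTop ∂μ := by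
          refine lintegral_mono_ae (hFu.mono fun x hx => ?_)
          rw [(tendsto_const_nhds.congr' ((hD_eventually x).mono fun N hN => by
            rw [hN])).liminf_eq]
          exact ENNReal.ofReal_le_ofReal (by linarith)
      _ ≤ liminf (fun N => ∫⁻ x, ENNReal.ofReal (v x - D N x) ∂μ) atTop :=
          lintegral_liminf_le' fun N => (hv.sub (hD_int N)).aemeasurable.ennreal_ofReal
      _ = ENNReal.ofReal (∫ x, v x ∂μ) := by
          refine (liminf_congr (Eventually.of_forall fun N => ?_)).trans (liminf_const _)
          rw [← ofReal_integral_eq_lintegral_ofReal (f := fun x => v x - D N x) (hv.sub (hD_int N))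
            (hD_le.mono fun x hx => sub_nonneg.2 (hx N)), integral_sub hv (hD_int N),
            hD_integral, sub_zero]
  rw [ENNReal.ofReal_le_ofReal_iff (integral_nonneg fun x => le_max_right (u x) 0),
    integral_sub hv hu] at hfatou
  linarith

end CoboundaryBound

namespace Setting

variable {Θ : Type*} [MeasurableSpace Θ] (S : Setting Θ)

lemma continuousOn_h : ContinuousOn S.h (Ici 0) :=
  fun x hx => (S.h_hasDeriv x hx).continuousWithinAt

lemma strictMonoOn_h : StrictMonoOn S.h (Ici 0) :=
  strictMonoOn_of_hasDerivWithinAt_pos (convex_Ici 0) S.continuousOn_h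
    (fun x hx => (S.h_hasDeriv x (interior_subset hx)).mono interior_subset)
    (fun x hx => S.h'_pos x (by rwa [interior_Ici] at hx))

lemma h_pos {x : ℝ} (hx : 0 < x) : 0 < S.h x := by
  simpa [S.h_zero] using S.strictMonoOn_h self_mem_Ici hx.le hx

lemma h_nonneg {x : ℝ} (hx : 0 ≤ x) : 0 ≤ S.h x := by
  rcases hx.eq_or_lt with rfl | hx
  · exact S.h_zero.ge
  · exact (S.h_pos hx).le

lemma h_lt_self {x : ℝ} (hx : 0 < x) : S.h x < x := by
  have := S.h_strictConcave.slope_lt_of_hasDerivWithinAt self_mem_Ici hx.le hx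
    (S.h_hasDeriv 0 self_mem_Ici)
  rwa [slope_def_field, S.h_zero, S.h'_zero, sub_zero, sub_zero, div_lt_one hx] at this

lemma log_h_div_self_neg {x : ℝ} (hx : 0 < x) : Real.log (S.h x / x) < 0 :=
  Real.log_neg (div_pos (S.h_pos hx) hx) ((div_lt_one hx).2 (S.h_lt_self hx))

lemma measurable_h_comp {u : Θ → ℝ} (hu : Measurable u) (hu0 : ∀ θ, 0 ≤ u θ) :
    Measurable fun θ => S.h (u θ) := by
  have hcont : Continuous fun x => S.h (max x 0) :=
    S.continuousOn_h.comp_continuous (continuous_id.max continuous_const)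
      fun x => le_max_right x 0
  simpa only [Function.comp_def, max_eq_left (hu0 _)] using hcont.measurable.comp hu

variable {t M : ℝ}

lemma f_nonneg (θ : Θ) {x : ℝ} (hx : 0 ≤ x) : 0 ≤ S.f t θ x :=
  mul_nonneg (mul_nonneg (Real.exp_pos _).le (S.g_pos θ).le) (S.h_nonneg hx)

lemma f_mono (θ : Θ) {x y : ℝ} (hx : 0 ≤ x) (hxy : x ≤ y) : S.f t θ x ≤ S.f t θ y :=
  mul_le_mul_of_nonneg_left (S.strictMonoOn_h.monotoneOn hx (hx.trans hxy) hxy)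
    (mul_nonneg (Real.exp_pos _).le (S.g_pos θ).le)

lemma integrable_log_g (hg : ∃ c : ℝ, 0 < c ∧ ∀ θ, c ≤ S.g θ) (μ : Measure Θ) [IsFiniteMeasure μ] :
    Integrable (fun θ => Real.log (S.g θ)) μ := by
  obtain ⟨c, hc, hcg⟩ := hg
  obtain ⟨C, hgC⟩ := S.g_bdd
  exact Integrable.of_bound (Real.measurable_log.comp S.g_meas).aestronglyMeasurable
    (max |Real.log c| |Real.log C|) <| ae_of_all _ fun θ =>
      abs_le_max_abs_abs (Real.log_le_log hc (hcg θ)) (Real.log_le_log (S.g_pos θ) (hgC θ))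

lemma continuousOn_f (θ : Θ) : ContinuousOn (S.f t θ) (Ici 0) :=
  continuousOn_const.mul S.continuousOn_h

lemma log_f {θ : Θ} {x : ℝ} (hx : 0 < x) :
    Real.log (S.f t θ x) = -t + Real.log (S.g θ) + Real.log (S.h x) := by
  rw [f, Real.log_mul (by positivity [S.g_pos θ]) (S.h_pos hx).ne',
    Real.log_mul (Real.exp_ne_zero _) (S.g_pos θ).ne', Real.log_exp]

lemma ψ_succ (n : ℕ) (θ : Θ) :
    S.ψ t M (n + 1) θ = S.f t (S.Tinv θ) (S.ψ t M n (S.Tinv θ)) := by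
  simp only [ψ, fn, Function.iterate_succ_apply, S.right_inv.iterate n _]

section Trapping

variable (hM : 0 ≤ M) (hMf : ∀ θ, S.f t θ M < M)
include hM hMf

lemma ψ_mem_Icc (n : ℕ) (θ : Θ) : S.ψ t M n θ ∈ Icc 0 M := by
  induction n generalizing θ with
  | zero => exact ⟨hM, le_rfl⟩
  | succ n ih =>
    rw [ψ_succ]
    exact ⟨S.f_nonneg _ (ih _).1, (S.f_mono _ (ih _).1 (ih _).2).trans (hMf _).le⟩

lemma ψ_succ_le (n : ℕ) (θ : Θ) : S.ψ t M (n + 1) θ ≤ S.ψ t M n θ := by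
  induction n generalizing θ with
  | zero => exact (S.ψ_succ 0 θ).trans_le (hMf _).le
  | succ n ih =>
    rw [S.ψ_succ (n + 1) θ, S.ψ_succ n θ]
    exact S.f_mono _ (S.ψ_mem_Icc hM hMf _ _).1 (ih _)

lemma tendsto_ψ_φ (θ : Θ) :
    Tendsto (fun n => S.ψ t M (n + 1) θ) atTop (𝓝 (S.φ t M θ)) :=
  tendsto_atTop_ciInf (antitone_nat_of_succ_le fun n => S.ψ_succ_le hM hMf (n + 1) θ)
    ⟨0, forall_mem_range.2 fun n => (S.ψ_mem_Icc hM hMf (n + 1) θ).1⟩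

lemma φ_mem_Icc (θ : Θ) : S.φ t M θ ∈ Icc 0 M :=
  isClosed_Icc.mem_of_tendsto (S.tendsto_ψ_φ hM hMf θ)
    (Eventually.of_forall fun _ => S.ψ_mem_Icc hM hMf _ θ)

lemma φ_T (θ : Θ) : S.φ t M (S.T θ) = S.f t θ (S.φ t M θ) := by
  have hψ := S.tendsto_ψ_φ hM hMf θ
  have hf : Tendsto (fun n => S.f t θ (S.ψ t M (n + 1) θ)) atTop (𝓝 (S.f t θ (S.φ t M θ))) :=
    ((S.continuousOn_f θ).continuousWithinAt (S.φ_mem_Icc hM hMf θ).1).tendsto.comp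
      (tendsto_nhdsWithin_iff.2 ⟨hψ, Eventually.of_forall fun _ => (S.ψ_mem_Icc hM hMf _ θ).1⟩)
  refine tendsto_nhds_unique ((S.tendsto_ψ_φ hM hMf (S.T θ)).comp (tendsto_add_atTop_nat 1)) ?_
  simpa only [Function.comp_def, S.ψ_succ (_ + 1), S.left_inv θ] using hf

lemma measurable_ψ (n : ℕ) : Measurable (S.ψ t M n) := by
  induction n with
  | zero => exact measurable_const
  | succ n ih =>
    have hψ : S.ψ t M (n + 1) = (fun θ => S.f t θ (S.ψ t M n θ)) ∘ S.Tinv :=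
      funext (S.ψ_succ n)
    rw [hψ]
    exact ((measurable_const.mul S.g_meas).mul
      (S.measurable_h_comp ih fun θ => (S.ψ_mem_Icc hM hMf n θ).1)).comp S.Tinv_meas

lemma measurable_φ : Measurable (S.φ t M) :=
  Measurable.iInf fun n => S.measurable_ψ hM hMf (n + 1)

lemma log_φ_T_sub_log_φ {θ : Θ} (hθ : 0 < S.φ t M θ) :
    Real.log (S.φ t M (S.T θ)) - Real.log (S.φ t M θ) =
      Real.log (S.g θ) - t + Real.log (S.h (S.φ t M θ) / S.φ t M θ) := by
  rw [S.φ_T hM hMf, S.log_f hθ, Real.log_div (S.h_pos hθ).ne' hθ.ne']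
  ring

lemma ae_φ_pos {μ : Measure Θ} (hN : μ (S.Nset t M) = 0) : ∀ᵐ θ ∂μ, 0 < S.φ t M θ :=
  (measure_eq_zero_iff_ae_notMem.1 hN).mono fun θ hθ =>
    (S.φ_mem_Icc hM hMf θ).1.lt_of_ne (Ne.symm hθ)

end Trapping

end Setting

theorem stmt10_general {Θ : Type*} [MeasurableSpace Θ] (S : Setting Θ)
    (hg : ∃ c : ℝ, 0 < c ∧ ∀ θ, c ≤ S.g θ)
    (t M : ℝ) (hM : 0 < M) (hMf : ∀ θ, S.f t θ M < M)
    (μ : Measure Θ) [IsProbabilityMeasure μ] (hμ : MeasurePreserving S.T μ μ)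
    (hN : μ (S.Nset t M) = 0) :
    t < S.γfn μ := by
  set φ := S.φ t M
  have hφ_mem := S.φ_mem_Icc hM.le hMf
  have hφ_meas := S.measurable_φ hM.le hMf
  have hφ_pos := S.ae_φ_pos hM.le hMf hN
  -- Truncating `log (h φ / φ) < 0` from below keeps it negative and makes it integrable.
  set H : Θ → ℝ := fun θ => max (Real.log (S.h (φ θ) / φ θ)) (-1)
  have hH_neg : ∀ᵐ θ ∂μ, H θ < 0 := hφ_pos.mono fun θ hθ =>
    max_lt (S.log_h_div_self_neg hθ) (by norm_num)
  have hH_int : Integrable H μ :=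
    Integrable.of_bound ((Real.measurable_log.comp ((S.measurable_h_comp hφ_meas
      fun θ => (hφ_mem θ).1).div hφ_meas)).max measurable_const).aestronglyMeasurable 1
      (hH_neg.mono fun θ hθ => abs_le.2 ⟨le_max_right _ _, by linarith⟩)
  have hG_int : Integrable (fun θ => Real.log (S.g θ) - t) μ :=
    (S.integrable_log_g hg μ).sub (integrable_const t)
  have hcob := integral_nonneg_of_comp_sub_le (u := fun θ => (Real.log (S.g θ) - t) + H θ) hμ
    (Real.measurable_log.comp hφ_meas)
    ⟨M, forall_mem_range.2 fun θ => (Real.log_le_self (hφ_mem θ).1).trans (hφ_mem θ).2⟩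
    (hG_int.add hH_int)
    (hφ_pos.mono fun θ hθ => (S.log_φ_T_sub_log_φ hM.le hMf hθ).trans_le
      (add_le_add le_rfl (le_max_left _ _)))
  rw [integral_add hG_int hH_int, integral_sub (S.integrable_log_g hg μ) (integrable_const t),
    integral_const, probReal_univ, one_smul] at hcob
  linarith [integral_neg_of_ae_neg hH_int hH_neg, show S.γfn μ = ∫ θ, Real.log (S.g θ) ∂μ from rfl]

/-- assuming `h''(0) < 0` and `inf g > 0`, for a `T`-invariant probability
measure `μ`: if `μ(N_t) = 0` then `γ(μ) > t`. -/
theorem stmt10 {Θ : Type*} [MeasurableSpace Θ] (S : Setting Θ)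
    (hsecond : ∃ c : ℝ, c < 0 ∧ HasDerivWithinAt S.h' c (Set.Ici 0) 0)
    (hg : ∃ c : ℝ, 0 < c ∧ ∀ θ, c ≤ S.g θ)
    (t M : ℝ) (hM : 0 < M) (hMf : ∀ θ, S.f t θ M < M)
    (μ : Measure Θ) [IsProbabilityMeasure μ] (hμ : MeasurePreserving S.T μ μ)
    (hN : μ (S.Nset t M) = 0) :
    t < S.γfn μ :=
  stmt10_general S hg t M hM hMf μ hμ hN
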